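/- arXiv:1107.3645 — 2 statements merged into one kernel-verified Lean document; each statement's English description precedes it below -/
import Mathlib

section
/- Let Γ₁ and Γ₂ be locally finite connected directed graphs with edge labels from a finite set, and let a ∈ Γ₁, b ∈ Γ₂ be vertices. If for every n ∈ ℕ there exists a label-preserving graph isomorphism from the ball B_n(a) onto B_n(b) sending a to b, then there exists a label-preserving isomorphism α : Γ₁ → Γ₂ with α(a) = b. -/
/-!
Isomorphisms of balls restrict to isomorphisms of smaller balls, and by local finiteness each ball
admits only finitely many of them. König's lemma for the inverse system of these finite nonempty
sets yields a coherent family `g n : B_n(a) ≅ B_n(b)`, each the restriction of the next. By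
connectedness every vertex lies in some ball, so the family glues to a global isomorphism; its
inverse is glued from the inverse family.
-/

/-- Undirected adjacency in a labeled directed graph given by edge
relations `E l`. -/
def AdjRel {V L : Type*} (E : L → V → V → Prop) (x y : V) : Prop :=
  ∃ l, E l x y ∨ E l y x

/-- `Within E n a y` means `d(a,y) ≤ n`: `y` is reachable from `a` by an
undirected path of length at most `n`; thus the ball `B_n(a)` is
`{y | Within E n a y}`. -/
def Within {V L : Type*} (E : L → V → V → Prop) : ℕ → V → V → Prop
  | 0, x, y => x = y
  | n + 1, x, y => Within E n x y ∨ ∃ z, Within E n x z ∧ AdjRel E z y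

/-- A labeled directed graph is locally finite if every vertex has only
finitely many in- and out-neighbors (over all labels). -/
def LocallyFiniteGraph {V L : Type*} (E : L → V → V → Prop) : Prop :=
  ∀ v : V, {w : V | AdjRel E v w}.Finite

/-- A labeled directed graph is connected if any two vertices are joined
by an undirected path. -/
def ConnectedGraph {V L : Type*} (E : L → V → V → Prop) : Prop :=
  ∀ v w : V, ∃ n, Within E n v w

theorem Within.self {V L : Type*} (E : L → V → V → Prop) (a : V) :
    ∀ n : ℕ, Within E n a a
  | 0 => rfl
  | n + 1 => Or.inl (Within.self E a n)

section

variable {V V₁ V₂ L : Type*}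

theorem Within.mono {E : L → V → V → Prop} {n m : ℕ} (hnm : n ≤ m) {a y : V}
    (h : Within E n a y) : Within E m a y := by
  induction hnm with
  | refl => exact h
  | step _ ih => exact Or.inl ih

theorem LocallyFiniteGraph.finite_ball {E : L → V → V → Prop} (hlf : LocallyFiniteGraph E)
    (a : V) : ∀ n : ℕ, {y : V | Within E n a y}.Finite
  | 0 => (Set.finite_singleton a).subset fun _ hy => hy.symm
  | n + 1 => by
    have h := hlf.finite_ball a n
    refine (h.union (h.biUnion fun z _ => hlf z)).subset ?_
    rintro y (hy | ⟨z, hz, hzy⟩)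
    · exact Or.inl hy
    · exact Or.inr (Set.mem_biUnion hz hzy)

@[ext]
structure BallIso (E₁ : L → V₁ → V₁ → Prop) (E₂ : L → V₂ → V₂ → Prop) (a : V₁) (b : V₂)
    (n : ℕ) where
  toEquiv : {y : V₁ // Within E₁ n a y} ≃ {y : V₂ // Within E₂ n b y}
  map_center : (toEquiv ⟨a, Within.self E₁ a n⟩ : V₂) = b
  map_rel_iff : ∀ (l : L) (x y : {y : V₁ // Within E₁ n a y}),
    E₁ l x y ↔ E₂ l (toEquiv x) (toEquiv y)

namespace BallIso

variable {E₁ : L → V₁ → V₁ → Prop} {E₂ : L → V₂ → V₂ → Prop} {a : V₁} {b : V₂} {n m : ℕ}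

def symm (g : BallIso E₁ E₂ a b n) : BallIso E₂ E₁ b a n where
  toEquiv := g.toEquiv.symm
  map_center := by
    rw [(Equiv.symm_apply_eq _).mpr (Subtype.ext g.map_center.symm)]
  map_rel_iff l x y := by
    rw [g.map_rel_iff, Equiv.apply_symm_apply, Equiv.apply_symm_apply]

theorem within_apply (g : BallIso E₁ E₂ a b m) (hnm : n ≤ m) {y : V₁} (hy : Within E₁ n a y) :
    Within E₂ n b (g.toEquiv ⟨y, hy.mono hnm⟩ : V₂) := by
  induction n generalizing y with
  | zero => cases hy; exact g.map_center.symm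
  | succ n ih =>
    have hnm' := Nat.le_of_succ_le hnm
    rcases hy with hy | ⟨z, hz, l, hzy⟩
    · exact Or.inl (ih hnm' hy)
    · refine Or.inr ⟨_, ih hnm' hz, l, ?_⟩
      rcases hzy with h | h
      · exact Or.inl ((g.map_rel_iff l ⟨z, _⟩ ⟨y, _⟩).1 h)
      · exact Or.inr ((g.map_rel_iff l ⟨y, _⟩ ⟨z, _⟩).1 h)

def restrict (g : BallIso E₁ E₂ a b m) (hnm : n ≤ m) : BallIso E₁ E₂ a b n where
  toEquiv :=
    { toFun := fun y => ⟨g.toEquiv ⟨y, y.2.mono hnm⟩, g.within_apply hnm y.2⟩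
      invFun := fun y => ⟨g.symm.toEquiv ⟨y, y.2.mono hnm⟩, g.symm.within_apply hnm y.2⟩
      left_inv := fun _ => by simp [symm]
      right_inv := fun _ => by simp [symm] }
  map_center := g.map_center
  map_rel_iff l x y := g.map_rel_iff l ⟨x, x.2.mono hnm⟩ ⟨y, y.2.mono hnm⟩

theorem restrict_symm (g : BallIso E₁ E₂ a b m) (hnm : n ≤ m) :
    (g.restrict hnm).symm = g.symm.restrict hnm := rfl

instance [Finite {y : V₁ // Within E₁ n a y}] [Finite {y : V₂ // Within E₂ n b y}] :
    Finite (BallIso E₁ E₂ a b n) :=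
  Finite.of_injective toEquiv fun _ _ => BallIso.ext

end BallIso

section Coherent

variable {E₁ : L → V₁ → V₁ → Prop} {E₂ : L → V₂ → V₂ → Prop} {a : V₁} {b : V₂} {n m : ℕ}

def BallIso.Coherent (g : ∀ n, BallIso E₁ E₂ a b n) : Prop :=
  ∀ ⦃n m : ℕ⦄ (hnm : n ≤ m), (g m).restrict hnm = g n

open CategoryTheory in
def ballIsoSystem (E₁ : L → V₁ → V₁ → Prop) (E₂ : L → V₂ → V₂ → Prop) (a : V₁) (b : V₂) :
    ℕᵒᵖ ⥤ Type _ where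
  obj n := BallIso E₁ E₂ a b n.unop
  map f := TypeCat.ofHom fun g => g.restrict (leOfHom f.unop)
  map_id _ := rfl
  map_comp _ _ := rfl

open CategoryTheory in
theorem exists_coherent_ballIso (hlf₁ : LocallyFiniteGraph E₁) (hlf₂ : LocallyFiniteGraph E₂)
    (hne : ∀ n, Nonempty (BallIso E₁ E₂ a b n)) :
    ∃ g : ∀ n, BallIso E₁ E₂ a b n, BallIso.Coherent g := by
  have : ∀ n : ℕᵒᵖ, Finite ((ballIsoSystem E₁ E₂ a b).obj n) := fun n =>
    have : Finite {y // Within E₁ n.unop a y} := (hlf₁.finite_ball a n.unop).to_subtype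
    have : Finite {y // Within E₂ n.unop b y} := (hlf₂.finite_ball b n.unop).to_subtype
    inferInstanceAs (Finite (BallIso E₁ E₂ a b n.unop))
  have : ∀ n : ℕᵒᵖ, Nonempty ((ballIsoSystem E₁ E₂ a b).obj n) := fun n => hne n.unop
  obtain ⟨u, hu⟩ := nonempty_sections_of_finite_inverse_system (ballIsoSystem E₁ E₂ a b)
  exact ⟨fun n => u (.op n), fun n m hnm => hu (homOfLE hnm).op⟩

noncomputable def BallIso.glue (g : ∀ n, BallIso E₁ E₂ a b n) (hc : ConnectedGraph E₁)
    (x : V₁) : V₂ :=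
  (g (hc a x).choose).toEquiv ⟨x, (hc a x).choose_spec⟩

namespace BallIso.Coherent

variable {g : ∀ n, BallIso E₁ E₂ a b n}

theorem symm (hg : Coherent g) : Coherent fun n => (g n).symm := fun _ _ hnm => by
  rw [← restrict_symm, hg hnm]

theorem apply_eq (hg : Coherent g) {x : V₁} (hn : Within E₁ n a x) (hm : Within E₁ m a x) :
    ((g n).toEquiv ⟨x, hn⟩ : V₂) = (g m).toEquiv ⟨x, hm⟩ := by
  rw [← hg (le_max_left n m), ← hg (le_max_right n m)]
  rfl

theorem glue_eq (hg : Coherent g) (hc : ConnectedGraph E₁) {x : V₁} (hx : Within E₁ n a x) :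
    glue g hc x = (g n).toEquiv ⟨x, hx⟩ :=
  hg.apply_eq _ _

theorem glue_center (hg : Coherent g) (hc : ConnectedGraph E₁) : glue g hc a = b := by
  rw [hg.glue_eq hc (Within.self E₁ a 0)]
  exact (g 0).map_center

theorem glue_rel_iff (hg : Coherent g) (hc : ConnectedGraph E₁) (l : L) (x y : V₁) :
    E₁ l x y ↔ E₂ l (glue g hc x) (glue g hc y) := by
  obtain ⟨n, hx⟩ := hc a x
  obtain ⟨m, hy⟩ := hc a y
  rw [hg.glue_eq hc (hx.mono (le_max_left n m)), hg.glue_eq hc (hy.mono (le_max_right n m))]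
  exact (g (max n m)).map_rel_iff l ⟨x, _⟩ ⟨y, _⟩

theorem glue_symm_glue (hg : Coherent g) (hc₁ : ConnectedGraph E₁) (hc₂ : ConnectedGraph E₂)
    (x : V₁) : glue (fun n => (g n).symm) hc₂ (glue g hc₁ x) = x := by
  obtain ⟨n, hx⟩ := hc₁ a x
  rw [hg.glue_eq hc₁ hx, hg.symm.glue_eq hc₂ ((g n).toEquiv ⟨x, hx⟩).2]
  simp [BallIso.symm]

noncomputable def glueEquiv (hg : Coherent g) (hc₁ : ConnectedGraph E₁)
    (hc₂ : ConnectedGraph E₂) : V₁ ≃ V₂ where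
  toFun := glue g hc₁
  invFun := glue (fun n => (g n).symm) hc₂
  left_inv := hg.glue_symm_glue hc₁ hc₂
  right_inv := hg.symm.glue_symm_glue hc₂ hc₁

end BallIso.Coherent

end Coherent

end

theorem ball_isomorphisms_extend_general {V₁ V₂ L : Type*}
    (E₁ : L → V₁ → V₁ → Prop) (E₂ : L → V₂ → V₂ → Prop)
    (hlf₁ : LocallyFiniteGraph E₁) (hlf₂ : LocallyFiniteGraph E₂)
    (hc₁ : ConnectedGraph E₁) (hc₂ : ConnectedGraph E₂)
    (a : V₁) (b : V₂)
    (hballs : ∀ n : ℕ, ∃ e : {y : V₁ // Within E₁ n a y} ≃ {y : V₂ // Within E₂ n b y},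
      (e ⟨a, Within.self E₁ a n⟩ : V₂) = b ∧
      ∀ (l : L) (x y : {y : V₁ // Within E₁ n a y}),
        E₁ l x y ↔ E₂ l (e x) (e y)) :
    ∃ α : V₁ ≃ V₂, α a = b ∧ ∀ (l : L) (x y : V₁), E₁ l x y ↔ E₂ l (α x) (α y) := by
  obtain ⟨g, hg⟩ := exists_coherent_ballIso hlf₁ hlf₂ fun n =>
    let ⟨e, he, hrel⟩ := hballs n
    ⟨⟨e, he, hrel⟩⟩
  exact ⟨hg.glueEquiv hc₁ hc₂, hg.glue_center hc₁, hg.glue_rel_iff hc₁⟩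

/-- Let `Γ₁`, `Γ₂` be locally finite connected directed graphs with edge
labels from a finite set `L`, and `a ∈ Γ₁`, `b ∈ Γ₂`.  If for every `n`
there is a label-preserving isomorphism from the ball `B_n(a)` onto
`B_n(b)` sending `a` to `b`, then there is a label-preserving isomorphism
`α : Γ₁ → Γ₂` with `α a = b`. -/
theorem ball_isomorphisms_extend {V₁ V₂ L : Type*} [Finite L]
    (E₁ : L → V₁ → V₁ → Prop) (E₂ : L → V₂ → V₂ → Prop)
    (hlf₁ : LocallyFiniteGraph E₁) (hlf₂ : LocallyFiniteGraph E₂)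
    (hc₁ : ConnectedGraph E₁) (hc₂ : ConnectedGraph E₂)
    (a : V₁) (b : V₂)
    (hballs : ∀ n : ℕ, ∃ e : {y : V₁ // Within E₁ n a y} ≃ {y : V₂ // Within E₂ n b y},
      (e ⟨a, Within.self E₁ a n⟩ : V₂) = b ∧
      ∀ (l : L) (x y : {y : V₁ // Within E₁ n a y}),
        E₁ l x y ↔ E₂ l (e x) (e y)) :
    ∃ α : V₁ ≃ V₂, α a = b ∧ ∀ (l : L) (x y : V₁), E₁ l x y ↔ E₂ l (α x) (α y) :=
  ball_isomorphisms_extend_general E₁ E₂ hlf₁ hlf₂ hc₁ hc₂ a b hballs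
end

section
/- Let (M, ·) be a monoid whose elements are strings in Σ* with the domain FA recognizable and the graph of multiplication FA recognizable. Then there exists a constant C such that for all m₁, …, m_n ∈ M: |m₁ · m₂ · ⋯ · m_n| ≤ max{|mᵢ| : 1 ≤ i ≤ n} + C · log₂(n). -/
/-!
Reading a DFA for the graph of multiplication along `⊗(u, v, uv)`: once past position
`max |u| |v|` only the third track is non-blank, so if `uv` overhangs by at least as many
letters as the automaton has states, a loop inside the overhang can be cut out. The shortened
word is again some `⊗(u', v', u'v')`, and since the loop was blank on the first two tracks,
`u' = u` and `v' = v`; functionality of the graph then contradicts the loss of length.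
Hence `|uv| ≤ max |u| |v| + C`. Bracketing `m₁ ⋯ mₙ` as a balanced binary tree of depth
`⌈log₂ n⌉` pays `C` once per level.
-/

/-- The convolution `⊗(w₁,…,w_k)` of a tuple of strings over `S` (with
`none` as the padding symbol `⋄`). -/
def conv {S : Type*} {k : ℕ} (w : Fin k → List S) : List (Fin k → Option S) :=
  (List.range (Finset.univ.sup fun i => (w i).length)).map fun j => fun i => (w i)[j]?

theorem DFA.exists_pump_down_in_suffix {α σ : Type*} [Fintype σ] (A : DFA α σ)
    {p t : List α} (h : p ++ t ∈ A.accepts) (ht : Fintype.card σ ≤ t.length) :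
    ∃ a b c, t = a ++ b ++ c ∧ b ≠ [] ∧ p ++ a ++ c ∈ A.accepts := by
  rw [DFA.mem_accepts, DFA.eval, DFA.evalFrom_of_append] at h
  obtain ⟨q, a, b, c, rfl, -, hb, ha, -, hc⟩ := A.evalFrom_split ht rfl
  refine ⟨a, b, c, rfl, hb, ?_⟩
  rwa [DFA.mem_accepts, DFA.eval, DFA.evalFrom_of_append, DFA.evalFrom_of_append, ha, hc]

theorem List.reduceOption_map_getElem?_range {α : Type*} (l : List α) {L : ℕ}
    (h : l.length ≤ L) : ((List.range L).map (l[·]?)).reduceOption = l := by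
  induction l generalizing L with
  | nil => simp [List.reduceOption]
  | cons a t ih =>
    obtain ⟨L, rfl⟩ := Nat.exists_eq_add_of_le' (Nat.zero_lt_of_lt h)
    rw [List.range_succ_eq_map]
    simpa [List.reduceOption_cons_of_some, Function.comp_def] using ih (by simpa using h)

theorem List.reduceOption_append_append_of_forall_eq_none {α : Type*}
    {l₁ l₂ l₃ : List (Option α)} (h : ∀ x ∈ l₂, x = none) :
    (l₁ ++ l₂ ++ l₃).reduceOption = (l₁ ++ l₃).reduceOption := by
  have : l₂.reduceOption = [] := List.filterMap_eq_nil_iff.mpr h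
  simp [List.reduceOption_append, this]

section Convolution

variable {S : Type*} {k : ℕ}

theorem length_le_length_conv (w : Fin k → List S) (i : Fin k) :
    (w i).length ≤ (conv w).length := by
  simpa [conv] using Finset.le_sup (f := fun i => (w i).length) (Finset.mem_univ i)

theorem reduceOption_map_conv (w : Fin k → List S) (i : Fin k) :
    ((conv w).map (· i)).reduceOption = w i := by
  rw [conv, List.map_map]
  exact List.reduceOption_map_getElem?_range _
    (Finset.le_sup (f := fun i => (w i).length) (Finset.mem_univ i))

theorem apply_eq_none_of_mem_drop_conv (w : Fin k → List S) {i : Fin k} {m : ℕ}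
    (hm : (w i).length ≤ m) {e : Fin k → Option S} (he : e ∈ (conv w).drop m) : e i = none := by
  obtain ⟨j, hj, rfl⟩ := List.mem_iff_getElem.mp he
  rw [List.getElem_drop]
  unfold conv
  rw [List.getElem_map, List.getElem_range]
  exact List.getElem?_eq_none (hm.trans (Nat.le_add_right m j))

end Convolution

theorem exists_length_le_max_add_of_isRegular_conv_graph {S : Type*} (M : Set (List S))
    (f : List S → List S → List S)
    (hreg : Language.IsRegular
      {c : List (Fin 3 → Option S) | ∃ u ∈ M, ∃ v ∈ M, c = conv ![u, v, f u v]}) :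
    ∃ C, ∀ u ∈ M, ∀ v ∈ M, (f u v).length ≤ max u.length v.length + C := by
  obtain ⟨σ, _, A, hA⟩ := hreg
  refine ⟨Fintype.card σ, fun u hu v hv => ?_⟩
  by_contra! hlong
  set m := max u.length v.length
  set x := conv ![u, v, f u v]
  have hx : x.take m ++ x.drop m ∈ A.accepts := by
    rw [List.take_append_drop, hA]
    exact ⟨u, hu, v, hv, rfl⟩
  have hdrop : Fintype.card σ ≤ (x.drop m).length := by
    have : (f u v).length ≤ x.length := length_le_length_conv ![u, v, f u v] 2
    rw [List.length_drop]
    omega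
  obtain ⟨a, b, c, habc, hb, hcut⟩ := A.exists_pump_down_in_suffix hx hdrop
  have hsplit : x = x.take m ++ a ++ b ++ c :=
    (List.take_append_drop m x).symm.trans (by simp only [habc, List.append_assoc])
  rw [hA] at hcut
  obtain ⟨u', -, v', -, hcut⟩ := hcut
  -- the cut-out block `b` lies beyond `max |u| |v|`, so it is blank on the first two tracks
  have hproj : ∀ i : Fin 3, (![u, v, f u v] i).length ≤ m →
      ![u', v', f u' v'] i = ![u, v, f u v] i := by
    intro i hi
    have hblank : ∀ o ∈ b.map (· i), o = none := by
      simp only [List.mem_map]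
      rintro _ ⟨e, he, rfl⟩
      exact apply_eq_none_of_mem_drop_conv _ hi (show e ∈ x.drop m by simp [habc, he])
    calc ![u', v', f u' v'] i = ((x.take m ++ a ++ c).map (· i)).reduceOption := by
          rw [hcut, reduceOption_map_conv]
      _ = ((x.take m ++ a ++ b ++ c).map (· i)).reduceOption := by
          simp only [List.map_append]
          exact (List.reduceOption_append_append_of_forall_eq_none hblank).symm
      _ = ![u, v, f u v] i := by rw [← hsplit, reduceOption_map_conv]
  obtain rfl : u' = u := hproj 0 (le_max_left _ _)
  obtain rfl : v' = v := hproj 1 (le_max_right _ _)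
  have hlen := congrArg List.length (hcut.trans hsplit)
  simp only [List.length_append] at hlen
  exact hb (List.length_eq_zero_iff.mp (by omega))

section Product

variable {S : Type*} (M : Set (List S)) (mul : List S → List S → List S)
  (hclosed : ∀ u ∈ M, ∀ v ∈ M, mul u v ∈ M)

include hclosed in
theorem foldl_mem {m : List S} {l : List (List S)} (hm : m ∈ M) (hl : ∀ v ∈ l, v ∈ M) :
    l.foldl mul m ∈ M := by
  induction l generalizing m with
  | nil => exact hm
  | cons h t ih =>
    exact ih (hclosed m hm h (hl h List.mem_cons_self))
      fun v hv => hl v (List.mem_cons_of_mem h hv)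

variable (hassoc : ∀ u ∈ M, ∀ v ∈ M, ∀ w ∈ M, mul (mul u v) w = mul u (mul v w))

include hclosed hassoc in
theorem foldl_mul_eq_mul_foldl {a b : List S} {l : List (List S)} (ha : a ∈ M) (hb : b ∈ M)
    (hl : ∀ v ∈ l, v ∈ M) : l.foldl mul (mul a b) = mul a (l.foldl mul b) := by
  induction l generalizing b with
  | nil => rfl
  | cons c t ih =>
    have hc : c ∈ M := hl c List.mem_cons_self
    rw [List.foldl_cons, List.foldl_cons, hassoc a ha b hb c hc,
      ih (hclosed b hb c hc) fun v hv => hl v (List.mem_cons_of_mem c hv)]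

include hclosed hassoc in
theorem foldl_append_cons {m h : List S} {l₁ l₂ : List (List S)} (hm : m ∈ M) (hh : h ∈ M)
    (hl₁ : ∀ v ∈ l₁, v ∈ M) (hl₂ : ∀ v ∈ l₂, v ∈ M) :
    (l₁ ++ h :: l₂).foldl mul m = mul (l₁.foldl mul m) (l₂.foldl mul h) := by
  rw [List.foldl_append, List.foldl_cons,
    foldl_mul_eq_mul_foldl M mul hclosed hassoc (foldl_mem M mul hclosed hm hl₁) hh hl₂]

include hclosed hassoc in
theorem length_foldl_le_of_length_lt_two_pow {C : ℕ}
    (hC : ∀ u ∈ M, ∀ v ∈ M, (mul u v).length ≤ max u.length v.length + C) {B : ℕ} (k : ℕ)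
    {m : List S} {l : List (List S)} (hm : m ∈ M) (hl : ∀ v ∈ l, v ∈ M)
    (hlen : l.length < 2 ^ k) (hB : ∀ x ∈ m :: l, x.length ≤ B) :
    (l.foldl mul m).length ≤ B + C * k := by
  induction k generalizing m l with
  | zero =>
    obtain rfl : l = [] := List.eq_nil_of_length_eq_zero (by simpa using hlen)
    simpa using hB m List.mem_cons_self
  | succ k ih =>
    rcases lt_or_ge l.length (2 ^ k) with hshort | hlong
    · exact (ih hm hl hshort hB).trans (by gcongr; omega)
    -- `m :: l.take j` consists of the first `2 ^ k` factors
    set j := 2 ^ k - 1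
    have hj : j < l.length := by omega
    have hsplit : l = l.take j ++ l[j] :: l.drop (j + 1) := by
      rw [List.getElem_cons_drop, List.take_append_drop]
    have hhead : l[j] ∈ M := hl _ (List.getElem_mem hj)
    have htake : ∀ v ∈ l.take j, v ∈ M := fun v hv => hl v (List.mem_of_mem_take hv)
    have hdrop : ∀ v ∈ l.drop (j + 1), v ∈ M := fun v hv => hl v (List.mem_of_mem_drop hv)
    have hfirst := ih hm htake (by rw [List.length_take]; omega)
      fun x hx => hB x (List.cons_subset_cons m (List.take_subset j l) hx)
    have hrest := ih hhead hdrop (by rw [List.length_drop]; rw [pow_succ] at hlen; omega)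
      fun x hx => hB x (List.mem_cons_of_mem m
        (List.mem_of_mem_drop (by rwa [List.getElem_cons_drop] at hx)))
    rw [hsplit, foldl_append_cons M mul hclosed hassoc hm hhead htake hdrop]
    calc _ ≤ max (List.foldl mul m (List.take j l)).length
            (List.foldl mul l[j] (List.drop (j + 1) l)).length + C :=
          hC _ (foldl_mem M mul hclosed hm htake) _ (foldl_mem M mul hclosed hhead hdrop)
      _ ≤ B + C * (k + 1) := by rw [mul_add_one, ← add_assoc]; gcongr; exact max_le hfirst hrest

end Product

theorem Nat.clog_two_le_two_mul_log_two (n : ℕ) : Nat.clog 2 n ≤ 2 * Nat.log 2 n := by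
  rcases Nat.lt_or_ge n 2 with h | h
  · interval_cases n <;> simp
  · have h1 : Nat.clog 2 n ≤ Nat.log 2 n + 1 :=
      (Nat.clog_le_iff_le_pow one_lt_two).mpr (Nat.lt_pow_succ_log_self one_lt_two n).le
    have h2 : 1 ≤ Nat.log 2 n := Nat.log_pos one_lt_two h
    omega

theorem automatic_monoid_log_growth_general {S : Type*}
    (M : Set (List S)) (mul : List S → List S → List S)
    (hclosed : ∀ u ∈ M, ∀ v ∈ M, mul u v ∈ M)
    (hassoc : ∀ u ∈ M, ∀ v ∈ M, ∀ w ∈ M, mul (mul u v) w = mul u (mul v w))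
    (hreg : Language.IsRegular
      {c : List (Fin 3 → Option S) |
        ∃ u ∈ M, ∃ v ∈ M, c = conv ![u, v, mul u v]}) :
    ∃ C : ℕ, ∀ (m : List S) (l : List (List S)), m ∈ M → (∀ v ∈ l, v ∈ M) →
      (l.foldl mul m).length ≤
        ((m :: l).map List.length).foldr max 0 + C * Nat.log 2 (l.length + 1) := by
  obtain ⟨C, hC⟩ := exists_length_le_max_add_of_isRegular_conv_graph M mul hreg
  refine ⟨2 * C, fun m l hm hl => ?_⟩
  set n := l.length + 1
  have hlen : l.length < 2 ^ Nat.clog 2 n := Nat.le_pow_clog one_lt_two n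
  have hmax : ∀ x ∈ m :: l, x.length ≤ ((m :: l).map List.length).foldr max 0 :=
    fun x hx => List.le_max_of_le' 0 (List.mem_map_of_mem hx) le_rfl
  calc _ ≤ ((m :: l).map List.length).foldr max 0 + C * Nat.clog 2 n :=
        length_foldl_le_of_length_lt_two_pow M mul hclosed hassoc hC _ hm hl hlen hmax
    _ ≤ ((m :: l).map List.length).foldr max 0 + 2 * C * Nat.log 2 n := by
        rw [mul_comm 2 C, mul_assoc]
        gcongr
        exact Nat.clog_two_le_two_mul_log_two n

/-- Let `(M, ·)` be a monoid whose elements are strings over a finite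
alphabet `S`, with FA recognizable domain and FA recognizable graph of
multiplication.  Then there is a constant `C` such that for all
`m₁, …, m_n ∈ M` (`n ≥ 1`, given as a head `m` and tail `l`):
`|m₁ ⋯ m_n| ≤ max |mᵢ| + C · log₂ n`. -/
theorem automatic_monoid_log_growth {S : Type*} [Fintype S]
    (M : Set (List S)) (mul : List S → List S → List S)
    (hclosed : ∀ u ∈ M, ∀ v ∈ M, mul u v ∈ M)
    (hassoc : ∀ u ∈ M, ∀ v ∈ M, ∀ w ∈ M, mul (mul u v) w = mul u (mul v w))
    (hdom : Language.IsRegular M)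
    (hreg : Language.IsRegular
      {c : List (Fin 3 → Option S) |
        ∃ u ∈ M, ∃ v ∈ M, c = conv ![u, v, mul u v]}) :
    ∃ C : ℕ, ∀ (m : List S) (l : List (List S)), m ∈ M → (∀ v ∈ l, v ∈ M) →
      (l.foldl mul m).length ≤
        ((m :: l).map List.length).foldr max 0 + C * Nat.log 2 (l.length + 1) :=
  automatic_monoid_log_growth_general M mul hclosed hassoc hreg
end
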